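/- For all integers m ≥ 1 and t ≥ 1, every vertex of K_{m,t-1} has degree in K_{m,t} equal to (m+1) times its degree in K_{m,t-1}. -/

import Mathlib

/-- The triangles of the Koch network `K_{m,t}`: at step `t+1`, each old triangle survives and
each (triangle, corner, group) creates a new triangle. -/
def KochTri (m : ℕ) : ℕ → Type
  | 0 => Unit
  | t+1 => KochTri m t ⊕ (KochTri m t × Fin 3 × Fin m)

/-- The vertices of the Koch network `K_{m,t}`: at step `t+1`, each (triangle, corner, group)
creates two new vertices. -/
def KochVertex (m : ℕ) : ℕ → Type
  | 0 => Fin 3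
  | t+1 => KochVertex m t ⊕ (KochTri m t × Fin 3 × Fin m × Fin 2)

/-- The three corner vertices of each triangle. -/
def KochCorner (m : ℕ) : ∀ t, KochTri m t → Fin 3 → KochVertex m t
  | 0, _, i => i
  | t+1, Sum.inl τ, i => Sum.inl (KochCorner m t τ i)
  | t+1, Sum.inr (τ, c, g), i =>
      ![Sum.inl (KochCorner m t τ c), Sum.inr (τ, c, g, 0), Sum.inr (τ, c, g, 1)] i

instance KochTri.instDecidableEq (m : ℕ) : ∀ t, DecidableEq (KochTri m t)
  | 0 => inferInstanceAs (DecidableEq Unit)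
  | t+1 =>
    letI := KochTri.instDecidableEq m t
    inferInstanceAs (DecidableEq (KochTri m t ⊕ (KochTri m t × Fin 3 × Fin m)))

instance KochVertex.instDecidableEq (m : ℕ) : ∀ t, DecidableEq (KochVertex m t)
  | 0 => inferInstanceAs (DecidableEq (Fin 3))
  | t+1 =>
    letI := KochVertex.instDecidableEq m t
    letI := KochTri.instDecidableEq m t
    inferInstanceAs (DecidableEq (KochVertex m t ⊕ (KochTri m t × Fin 3 × Fin m × Fin 2)))

instance KochTri.instFintype (m : ℕ) : ∀ t, Fintype (KochTri m t)
  | 0 => inferInstanceAs (Fintype Unit)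
  | t+1 =>
    letI := KochTri.instFintype m t
    inferInstanceAs (Fintype (KochTri m t ⊕ (KochTri m t × Fin 3 × Fin m)))

instance KochVertex.instFintype (m : ℕ) : ∀ t, Fintype (KochVertex m t)
  | 0 => inferInstanceAs (Fintype (Fin 3))
  | t+1 =>
    letI := KochVertex.instFintype m t
    letI := KochTri.instFintype m t
    inferInstanceAs (Fintype (KochVertex m t ⊕ (KochTri m t × Fin 3 × Fin m × Fin 2)))

/-- The Koch network `K_{m,t}`: two distinct vertices are adjacent iff they are corners of a
common triangle. -/
def KochGraph (m t : ℕ) : SimpleGraph (KochVertex m t) where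
  Adj u v := u ≠ v ∧ ∃ (τ : KochTri m t) (i j : Fin 3),
      KochCorner m t τ i = u ∧ KochCorner m t τ j = v
  symm := ⟨by rintro u v ⟨hne, τ, i, j, hi, hj⟩; exact ⟨hne.symm, τ, j, i, hj, hi⟩⟩
  loopless := ⟨by rintro u ⟨hne, -⟩; exact hne rfl⟩

instance (m t : ℕ) : DecidableRel (KochGraph m t).Adj := fun u v =>
  inferInstanceAs (Decidable (u ≠ v ∧ ∃ (τ : KochTri m t) (i j : Fin 3),
      KochCorner m t τ i = u ∧ KochCorner m t τ j = v))

/-- The step at which a vertex of `K_{m,t}` was added (initial vertices are added at step 0). -/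
def KochBirth (m : ℕ) : ∀ t, KochVertex m t → ℕ
  | 0, _ => 0
  | t+1, Sum.inl v => KochBirth m t v
  | t+1, Sum.inr _ => t+1

/-- The canonical inclusion of `K_{m,t}` into `K_{m,t+1}`. -/
def KochInl (m t : ℕ) (v : KochVertex m t) : KochVertex m (t+1) := Sum.inl v

/-- The other member of the group of two with which a (non-initial) vertex was added. -/
def KochSibling (m : ℕ) : ∀ t, KochVertex m t → KochVertex m t
  | 0, v => v
  | t+1, Sum.inl v => Sum.inl (KochSibling m t v)
  | t+1, Sum.inr (τ, c, g, p) => Sum.inr (τ, c, g, if p = 0 then 1 else 0)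

/-- The father vertex of a (non-initial) vertex: the existing vertex to which its group of two
was attached. -/
def KochFather (m : ℕ) : ∀ t, KochVertex m t → KochVertex m t
  | 0, v => v
  | t+1, Sum.inl v => Sum.inl (KochFather m t v)
  | t+1, Sum.inr (τ, c, _, _) => Sum.inl (KochCorner m t τ c)

/-!
Let `T v` (`kochCornerCount`) count the triangles of `K_{m,t}` having `v` as a corner. By
induction on `t`, the degree of every vertex is `2 * T v`: a vertex born at step `t + 1` lies on
exactly one triangle and has two neighbours, while an old vertex `v` keeps its neighbours and, for
each of its `T v` triangles and each of the `m` groups, gains two new neighbours and one new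
triangle. The same count gives the theorem: the degree of `v` grows by `2 * m * T v = m * deg v`.
-/

open Finset

lemma Finset.card_filter_sum_type {α β : Type*} [Fintype α] [Fintype β] (p : α ⊕ β → Prop)
    [DecidablePred p] : #{x | p x} = #{a | p (.inl a)} + #{b | p (.inr b)} := by
  simp only [card_filter, Fintype.sum_sum_type]

lemma Finset.card_filter_prod_sum_type {α β γ : Type*} [Fintype α] [Fintype β] [Fintype γ]
    (p : (α ⊕ β) × γ → Prop) [DecidablePred p] :
    #{x | p x} = #{x : α × γ | p (.inl x.1, x.2)} + #{x : β × γ | p (.inr x.1, x.2)} := by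
  let e := Equiv.sumProdDistrib α β γ
  exact (card_equiv e (by simp)).trans (card_filter_sum_type fun y => p (e.symm y))

lemma Finset.card_filter_prodAssoc {α β γ : Type*} [Fintype α] [Fintype β] [Fintype γ]
    (p : α → β → Prop) [∀ a b, Decidable (p a b)] :
    #{x : α × β × γ | p x.1 x.2.1} = #{x : α × β | p x.1 x.2} * Fintype.card γ := by
  rw [← card_univ, ← card_product, ← filter_product_left]
  exact card_equiv (Equiv.prodAssoc α β γ).symm (by simp)

lemma Finset.card_filter_prod_and_snd_eq {α β : Type*} [Fintype α] [Fintype β] [DecidableEq β]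
    (p : α → Prop) [DecidablePred p] (b : β) :
    #{x : α × β | p x.1 ∧ x.2 = b} = #{a | p a} := by
  refine card_nbij' Prod.fst (·, b) ?_ ?_ ?_ ?_ <;> intro x <;> simp +contextual [Prod.ext_iff]

section Koch

variable {m t : ℕ}

/- `KochInl` and `kochNewVertex` are `Sum.inl` and `Sum.inr` with type `KochVertex m (t + 1)`
rather than a sum type: a raw `Sum.inl u` in that position defeats unification at instance
transparency, which breaks `rw`, `simp` and instance search. -/
def kochNewVertex (m t : ℕ) (b : KochTri m t × Fin 3 × Fin m × Fin 2) : KochVertex m (t + 1) :=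
  .inr b

@[simp]
lemma kochInl_inj {u v : KochVertex m t} : KochInl m t u = KochInl m t v ↔ u = v :=
  Sum.inl_injective.eq_iff

@[simp]
lemma kochNewVertex_inj {a b : KochTri m t × Fin 3 × Fin m × Fin 2} :
    kochNewVertex m t a = kochNewVertex m t b ↔ a = b :=
  Sum.inr_injective.eq_iff

@[simp]
lemma kochInl_ne_kochNewVertex {v : KochVertex m t} {b : KochTri m t × Fin 3 × Fin m × Fin 2} :
    KochInl m t v ≠ kochNewVertex m t b :=
  Sum.inl_ne_inr

@[simp]
lemma kochNewVertex_ne_kochInl {v : KochVertex m t} {b : KochTri m t × Fin 3 × Fin m × Fin 2} :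
    kochNewVertex m t b ≠ KochInl m t v :=
  Sum.inr_ne_inl

@[simp]
lemma kochCorner_succ_inl (τ : KochTri m t) (i : Fin 3) :
    KochCorner m (t + 1) (.inl τ) i = KochInl m t (KochCorner m t τ i) := rfl

@[simp]
lemma kochCorner_succ_inr_zero (q : KochTri m t × Fin 3 × Fin m) :
    KochCorner m (t + 1) (.inr q) 0 = KochInl m t (KochCorner m t q.1 q.2.1) := rfl

@[simp]
lemma kochCorner_succ_inr_succ (q : KochTri m t × Fin 3 × Fin m) (p : Fin 2) :
    KochCorner m (t + 1) (.inr q) p.succ = kochNewVertex m t (q.1, q.2.1, q.2.2, p) := by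
  fin_cases p <;> rfl

lemma kochCorner_succ_inr_eq_kochInl_iff {q : KochTri m t × Fin 3 × Fin m} {i : Fin 3}
    {v : KochVertex m t} :
    KochCorner m (t + 1) (.inr q) i = KochInl m t v ↔ i = 0 ∧ KochCorner m t q.1 q.2.1 = v := by
  cases i using Fin.cases <;> simp [Fin.succ_ne_zero]

lemma kochCorner_succ_inr_eq_kochNewVertex_iff {q : KochTri m t × Fin 3 × Fin m} {i : Fin 3}
    {b : KochTri m t × Fin 3 × Fin m × Fin 2} :
    KochCorner m (t + 1) (.inr q) i = kochNewVertex m t b ↔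
      q = (b.1, b.2.1, b.2.2.1) ∧ i = b.2.2.2.succ := by
  obtain ⟨τ', c', g', p⟩ := b
  cases i using Fin.cases <;> simp [(Fin.succ_ne_zero _).symm, Prod.ext_iff, and_assoc]

lemma kochGraph_succ_adj_kochInl_kochInl {u v : KochVertex m t} :
    (KochGraph m (t + 1)).Adj (KochInl m t u) (KochInl m t v) ↔ (KochGraph m t).Adj u v := by
  constructor
  · rintro ⟨hne, τ | ⟨τ, c, g⟩, i, j, hi, hj⟩
    · exact ⟨by simpa using hne, τ, i, j, by simpa using hi, by simpa using hj⟩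
    · rw [kochCorner_succ_inr_eq_kochInl_iff] at hi hj
      exact absurd (by rw [← hi.2, ← hj.2]) hne
  · rintro ⟨hne, τ, i, j, hi, hj⟩
    exact ⟨by simpa using hne, .inl τ, i, j, by simp [hi], by simp [hj]⟩

lemma kochGraph_succ_adj_kochInl_kochNewVertex {v : KochVertex m t}
    {b : KochTri m t × Fin 3 × Fin m × Fin 2} :
    (KochGraph m (t + 1)).Adj (KochInl m t v) (kochNewVertex m t b) ↔
      KochCorner m t b.1 b.2.1 = v := by
  obtain ⟨τ, c, g, p⟩ := b
  constructor
  · rintro ⟨-, σ | ⟨σ, c', g'⟩, i, j, hi, hj⟩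
    · simp at hj
    · rw [kochCorner_succ_inr_eq_kochInl_iff] at hi
      rw [kochCorner_succ_inr_eq_kochNewVertex_iff] at hj
      obtain ⟨⟨rfl, rfl, rfl⟩, -⟩ := hj
      exact hi.2
  · rintro rfl
    exact ⟨by simp, .inr (τ, c, g), 0, p.succ, by simp, by simp⟩

lemma kochGraph_succ_adj_kochNewVertex_kochInl {v : KochVertex m t}
    {b : KochTri m t × Fin 3 × Fin m × Fin 2} :
    (KochGraph m (t + 1)).Adj (kochNewVertex m t b) (KochInl m t v) ↔
      KochCorner m t b.1 b.2.1 = v :=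
  (KochGraph m (t + 1)).adj_comm _ _ |>.trans kochGraph_succ_adj_kochInl_kochNewVertex

lemma kochGraph_succ_adj_kochNewVertex_kochNewVertex {τ τ' : KochTri m t} {c c' : Fin 3}
    {g g' : Fin m} {p p' : Fin 2} :
    (KochGraph m (t + 1)).Adj (kochNewVertex m t (τ, c, g, p))
        (kochNewVertex m t (τ', c', g', p')) ↔
      (τ, c, g) = (τ', c', g') ∧ p ≠ p' := by
  constructor
  · rintro ⟨hne, σ | σ, i, j, hi, hj⟩
    · simp at hi
    · rw [kochCorner_succ_inr_eq_kochNewVertex_iff] at hi hj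
      have h := hi.1.symm.trans hj.1
      refine ⟨h, fun hp => hne ?_⟩
      simp_all
  · rintro ⟨h, hp⟩
    simp only [Prod.mk.injEq] at h
    obtain ⟨rfl, rfl, rfl⟩ := h
    exact ⟨by simpa using hp, .inr (τ, c, g), p.succ, p'.succ, by simp, by simp⟩

lemma kochGraph_succ_degree_eq (w : KochVertex m (t + 1)) :
    (KochGraph m (t + 1)).degree w =
      #{u | (KochGraph m (t + 1)).Adj w (KochInl m t u)} +
        #{b | (KochGraph m (t + 1)).Adj w (kochNewVertex m t b)} := by
  rw [← SimpleGraph.card_neighborFinset_eq_degree, SimpleGraph.neighborFinset_eq_filter]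
  -- the instance is passed by hand: search does not see `KochVertex m (t + 1)` as a sum type
  exact @card_filter_sum_type _ _ _ _ _
    ((inferInstance : DecidableRel (KochGraph m (t + 1)).Adj) w)

def kochCornerCount (m t : ℕ) (v : KochVertex m t) : ℕ :=
  #{x : KochTri m t × Fin 3 | KochCorner m t x.1 x.2 = v}

lemma kochGraph_succ_degree_kochInl (v : KochVertex m t) :
    (KochGraph m (t + 1)).degree (KochInl m t v) =
      (KochGraph m t).degree v + kochCornerCount m t v * (m * 2) := by
  rw [kochGraph_succ_degree_eq]
  simp only [kochGraph_succ_adj_kochInl_kochInl, kochGraph_succ_adj_kochInl_kochNewVertex]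
  rw [← SimpleGraph.card_neighborFinset_eq_degree, SimpleGraph.neighborFinset_eq_filter,
    card_filter_prodAssoc fun τ c => KochCorner m t τ c = v]
  simp [kochCornerCount]

lemma kochGraph_succ_degree_kochNewVertex (b : KochTri m t × Fin 3 × Fin m × Fin 2) :
    (KochGraph m (t + 1)).degree (kochNewVertex m t b) = 2 := by
  obtain ⟨τ, c, g, p⟩ := b
  have hsibling : ∀ b' : KochTri m t × Fin 3 × Fin m × Fin 2,
      (KochGraph m (t + 1)).Adj (kochNewVertex m t (τ, c, g, p)) (kochNewVertex m t b') ↔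
        b' = (τ, c, g, p.rev) := by
    rintro ⟨τ', c', g', p'⟩
    rw [kochGraph_succ_adj_kochNewVertex_kochNewVertex]
    have : p ≠ p' ↔ p' = p.rev := by revert p p'; decide
    simp [this, eq_comm, and_assoc]
  rw [kochGraph_succ_degree_eq]
  simp only [kochGraph_succ_adj_kochNewVertex_kochInl, hsibling]
  rw [filter_eq, filter_eq']
  simp

lemma kochCornerCount_succ_kochInl (v : KochVertex m t) :
    kochCornerCount m (t + 1) (KochInl m t v) = kochCornerCount m t v * (m + 1) := by
  calc kochCornerCount m (t + 1) (KochInl m t v)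
      = #{x : KochTri m t × Fin 3 | KochCorner m (t + 1) (.inl x.1) x.2 = KochInl m t v} +
          #{x : (KochTri m t × Fin 3 × Fin m) × Fin 3 |
            KochCorner m (t + 1) (.inr x.1) x.2 = KochInl m t v} :=
        card_filter_prod_sum_type _
    _ = kochCornerCount m t v +
          #{x : (KochTri m t × Fin 3 × Fin m) × Fin 3 |
            KochCorner m t x.1.1 x.1.2.1 = v ∧ x.2 = 0} := by
        simp only [kochCorner_succ_inl, kochInl_inj, kochCorner_succ_inr_eq_kochInl_iff, and_comm]
        rfl
    _ = kochCornerCount m t v * (m + 1) := by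
        rw [card_filter_prod_and_snd_eq fun q : KochTri m t × Fin 3 × Fin m =>
            KochCorner m t q.1 q.2.1 = v,
          card_filter_prodAssoc fun τ c => KochCorner m t τ c = v]
        simp only [kochCornerCount, Fintype.card_fin]
        ring

lemma kochCornerCount_succ_kochNewVertex (b : KochTri m t × Fin 3 × Fin m × Fin 2) :
    kochCornerCount m (t + 1) (kochNewVertex m t b) = 1 := by
  calc kochCornerCount m (t + 1) (kochNewVertex m t b)
      = #{x : KochTri m t × Fin 3 | KochCorner m (t + 1) (.inl x.1) x.2 = kochNewVertex m t b} +
          #{x : (KochTri m t × Fin 3 × Fin m) × Fin 3 |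
            KochCorner m (t + 1) (.inr x.1) x.2 = kochNewVertex m t b} :=
        card_filter_prod_sum_type _
    _ = #{x : (KochTri m t × Fin 3 × Fin m) × Fin 3 |
            x = ((b.1, b.2.1, b.2.2.1), b.2.2.2.succ)} := by
        simp [kochCorner_succ_inr_eq_kochNewVertex_iff, Prod.ext_iff]
    _ = 1 := by rw [filter_eq']; simp

lemma kochCornerCount_zero (v : KochVertex m 0) : kochCornerCount m 0 v = 1 := by
  revert v
  change ∀ v : Fin 3, #{x : Unit × Fin 3 | x.2 = v} = 1
  decide

lemma kochGraph_zero_degree (v : KochVertex m 0) : (KochGraph m 0).degree v = 2 := by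
  have hadj : ∀ u, (KochGraph m 0).Adj v u ↔ v ≠ u :=
    fun u => ⟨And.left, fun h => ⟨h, (), v, u, rfl, rfl⟩⟩
  rw [← SimpleGraph.card_neighborFinset_eq_degree, SimpleGraph.neighborFinset_eq_filter]
  simp only [hadj]
  clear hadj
  revert v
  change ∀ v : Fin 3, #{u : Fin 3 | v ≠ u} = 2
  decide

end Koch

lemma kochGraph_degree_eq_two_mul_kochCornerCount {m : ℕ} :
    ∀ t (v : KochVertex m t), (KochGraph m t).degree v = 2 * kochCornerCount m t v
  | 0, v => by rw [kochGraph_zero_degree, kochCornerCount_zero]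
  | t + 1, .inl v => by
    change (KochGraph m (t + 1)).degree (KochInl m t v) =
      2 * kochCornerCount m (t + 1) (KochInl m t v)
    rw [kochGraph_succ_degree_kochInl, kochCornerCount_succ_kochInl,
      kochGraph_degree_eq_two_mul_kochCornerCount t v]
    ring
  | t + 1, .inr b => by
    change (KochGraph m (t + 1)).degree (kochNewVertex m t b) =
      2 * kochCornerCount m (t + 1) (kochNewVertex m t b)
    rw [kochGraph_succ_degree_kochNewVertex, kochCornerCount_succ_kochNewVertex]

theorem koch_degree_growth_general (m t : ℕ) (v : KochVertex m t) :
    (KochGraph m (t + 1)).degree (KochInl m t v) = (m + 1) * (KochGraph m t).degree v := by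
  rw [kochGraph_succ_degree_kochInl, kochGraph_degree_eq_two_mul_kochCornerCount]
  ring

/-- For all integers m ≥ 1 and t ≥ 1, every vertex of `K_{m,t-1}` has degree in
`K_{m,t}` equal to `(m+1)` times its degree in `K_{m,t-1}`. (Here the step `t ≥ 1` is written
as `t+1`.) -/
theorem koch_degree_growth (m t : ℕ) (hm : 1 ≤ m) (v : KochVertex m t) :
    (KochGraph m (t + 1)).degree (KochInl m t v) = (m + 1) * (KochGraph m t).degree v :=
  koch_degree_growth_general m t v
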